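/- Let $A$ be a finitely generated commutative $\mathbb{Z}$-algebra and let $\mathfrak{m}$ be a maximal ideal of $A$. Then the quotient ring $A/\mathfrak{m}$ is a finite field; in particular, it is a field of positive characteristic. -/

import Mathlib

/-!
By Zariski's lemma over the Jacobson ring `ℤ`, a field `K` that is finitely generated as a ring
is a finitely generated abelian group, hence integral over `ℤ`. Its characteristic cannot be `0`,
since then `ℤ ⊆ K` would be an integral extension of a non-field by a field; so `K` is an
`ℤ`-module killed by a prime `p`, and a finitely generated torsion abelian group is finite.
-/

open Ideal

theorem isJacobsonRing_of_jacobson_bot_eq_bot {R : Type*} [CommRing R] [Ring.DimensionLEOne R]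
    (h : (⊥ : Ideal R).jacobson = ⊥) : IsJacobsonRing R := by
  refine isJacobsonRing_iff_prime_eq.mpr fun P hP => ?_
  rcases eq_or_ne P ⊥ with rfl | hP₀
  · exact h
  · have := hP.isMaximal hP₀
    exact jacobson_eq_self_of_isMaximal

theorem Int.jacobson_bot : (⊥ : Ideal ℤ).jacobson = ⊥ := by
  refine eq_bot_iff.mpr fun x hx => ?_
  -- `x * x + 1` is a unit, i.e. `± 1`, which forces `x = 0`.
  have hunit := Int.isUnit_iff.mp (mem_jacobson_bot.mp hx x)
  rw [mem_bot]
  rcases hunit with h | h <;> nlinarith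

instance Int.isJacobsonRing : IsJacobsonRing ℤ :=
  isJacobsonRing_of_jacobson_bot_eq_bot Int.jacobson_bot

theorem Field.exists_charP_prime_of_isIntegral_int (K : Type*) [Field K]
    [Algebra.IsIntegral ℤ K] : ∃ p : ℕ, p.Prime ∧ CharP K p := by
  rcases CharP.exists' K with hK | ⟨p, hp, hK⟩
  · exact (Int.not_isField <| isField_of_isIntegral_of_isField
      (algebraMap ℤ K).injective_int (Field.toIsField K)).elim
  · exact ⟨p, hp.out, hK⟩

theorem finite_of_charP_of_moduleFinite_int (R : Type*) [Ring R] [Module.Finite ℤ R]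
    (p : ℕ) [CharP R p] (hp : p ≠ 0) : Finite R := by
  refine Module.finite_of_fg_torsion R fun x => ⟨⟨p, ?_⟩, ?_⟩
  · exact mem_nonZeroDivisors_of_ne_zero (Int.natCast_ne_zero.mpr hp)
  · simp

theorem Field.finite_of_finiteType_int (K : Type*) [Field K] [Algebra.FiniteType ℤ K] :
    Finite K ∧ ∃ p : ℕ, p.Prime ∧ CharP K p := by
  have : Module.Finite ℤ K := finite_of_finite_type_of_isJacobsonRing ℤ K
  obtain ⟨p, hp, hK⟩ := Field.exists_charP_prime_of_isIntegral_int K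
  exact ⟨finite_of_charP_of_moduleFinite_int K p hp.ne_zero, p, hp, hK⟩

/-- **Residue fields of closed points are finite (affine form; Hilbert's
Nullstellensatz over `ℤ`).**  If `A` is a finitely generated commutative
`ℤ`-algebra and `𝔪` is a maximal ideal of `A`, then the quotient `A ⧸ 𝔪` is a
finite field; in particular it has positive (prime) characteristic. -/
theorem quotient_maximalIdeal_finite_of_finiteType_int
    (A : Type) [CommRing A] [Algebra.FiniteType ℤ A]
    (𝔪 : Ideal A) (h𝔪 : 𝔪.IsMaximal) :
    Finite (A ⧸ 𝔪) ∧ ∃ p : ℕ, p.Prime ∧ CharP (A ⧸ 𝔪) p := by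
  let := Quotient.field 𝔪
  -- the instance `Ideal.Quotient.algebra ℤ` only agrees with `algebraInt` up to unfolding
  exact @Field.finite_of_finiteType_int _ _ (Algebra.FiniteType.quotient ℤ 𝔪)
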